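/- Let G₁, G₂ be connected graphs and t, n positive integers with 2 ≤ t < n and n − t even. Then Shu^t_n(G₁) ≅ Shu^t_n(G₂) if and only if G₁ ≅ G₂. -/

import Mathlib

/-- The `(t,n)`-shuriken graph of `G` (with `1`-indexed copies `1,…,n` of the
paper encoded as `Fin n`, `0`-indexed). A new vertex `z` (encoded `none`) is
added to `G`, and `n` copies are taken. Edges: copies of edges of `G` across
all pairs of copies; all edges within copy `i` for `i ≤ t`; and all edges
between copies `i` and `n + t + 1 - i` for `t + 1 ≤ i ≤ (n + t)/2`. -/
def Shu (t n : ℕ) {V : Type*} (G : SimpleGraph V) :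
    SimpleGraph (Fin n × Option V) where
  Adj x y :=
    (∃ u v, x.2 = some u ∧ y.2 = some v ∧ G.Adj u v) ∨
    (x.1 = y.1 ∧ x.1.val < t ∧ x.2 ≠ y.2) ∨
    (x.1 ≠ y.1 ∧ x.1.val + y.1.val = n + t - 1 ∧ t ≤ x.1.val ∧ t ≤ y.1.val)
  symm := by
    constructor
    rintro x y (⟨u, v, h1, h2, h3⟩ | ⟨h1, h2, h3⟩ | ⟨h1, h2, h3, h4⟩)
    · exact Or.inl ⟨v, u, h2, h1, h3.symm⟩
    · exact Or.inr (Or.inl ⟨h1.symm, h1 ▸ h2, h3.symm⟩)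
    · exact Or.inr (Or.inr ⟨h1.symm, by omega, h4, h3⟩)
  loopless := by
    constructor
    rintro x (⟨u, v, h1, h2, h3⟩ | ⟨h1, h2, h3⟩ | ⟨h1, h2, h3⟩)
    · rw [h1] at h2
      injection h2 with h
      exact G.irrefl (v := u) (h ▸ h3)
    · exact h3 rfl
    · exact h1 rfl

/-!
If `G` has no isolated vertex, the simplicial vertices of `Shu t n G` (those whose neighbourhood
is a clique) are exactly the apexes `(i, none)` of the clique copies `i < t`: a vertex
`(i, some v)` sees `(0, some u)` and `(1, some u)` for a neighbour `u` of `v`, and an apex of a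
copy `i ≥ t` sees both the apex and the other vertices of its partner copy. An isomorphism
`φ : Shu t n G₁ ≃g Shu t n G₂` therefore maps the clique copies `0` and `1` onto clique copies
`j₀ ≠ j₁`, inducing bijections `ψ₀, ψ₁ : V₁ ≃ V₂`. Adjacency between different copies is that of
`G`, so `u ~ v ↔ ψ₀ u ~ ψ₁ v`; comparing neighbourhoods in a third copy shows that `ψ₀ v` and
`ψ₁ v` have the same neighbours, hence `ψ₀` is an isomorphism. Only `G₂` has to be free of
isolated vertices here, and a connected graph with an isolated vertex is a single vertex; so unless
both graphs are single vertices, the argument applies to `φ` or to `φ.symm`.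
-/

open SimpleGraph

theorem SimpleGraph.nonempty_iso_of_subsingleton {V W : Type*} [Subsingleton V] [Subsingleton W]
    [Nonempty V] [Nonempty W] (G : SimpleGraph V) (H : SimpleGraph W) : Nonempty (G ≃g H) :=
  ⟨⟨equivOfSubsingletonOfSubsingleton (fun _ => Classical.arbitrary W)
    (fun _ => Classical.arbitrary V), fun {u v} => by simp [Subsingleton.elim u v]⟩⟩

theorem SimpleGraph.Iso.isClique_neighborSet_iff {V W : Type*} {G : SimpleGraph V}
    {H : SimpleGraph W} (φ : G ≃g H) (v : V) :
    H.IsClique (H.neighborSet (φ v)) ↔ G.IsClique (G.neighborSet v) := by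
  simp only [IsClique, Set.Pairwise, mem_neighborSet, φ.surjective.forall, φ.map_adj_iff,
    φ.injective.ne_iff]

def Equiv.prodSlice {α β α' β' : Type*} (e : α × β ≃ α' × β') (a : α) (a' : α')
    (h : ∀ x, (e x).1 = a' ↔ x.1 = a) : β ≃ β' where
  toFun b := (e (a, b)).2
  invFun b' := (e.symm (a', b')).2
  left_inv b := by
    have : (a', (e (a, b)).2) = e (a, b) := Prod.ext ((h _).2 rfl).symm rfl
    simp [this]
  right_inv b' := by
    have : (a, (e.symm (a', b')).2) = e.symm (a', b') := Prod.ext ((h _).1 (by simp)).symm rfl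
    simp [this]

theorem Equiv.apply_eq_prodSlice {α β α' β' : Type*} (e : α × β ≃ α' × β') {a : α} {a' : α'}
    (h : ∀ x, (e x).1 = a' ↔ x.1 = a) (b : β) : e (a, b) = (a', e.prodSlice a a' h b) :=
  Prod.ext ((h _).2 rfl) rfl

theorem Equiv.apply_some_eq_removeNone_prodSlice {α β α' β' : Type*}
    (e : α × Option β ≃ α' × Option β') {a : α} {a' : α'} (h : ∀ x, (e x).1 = a' ↔ x.1 = a)
    (h₀ : e (a, none) = (a', none)) (b : β) :
    e (a, some b) = (a', some ((e.prodSlice a a' h).removeNone b)) := by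
  have hnone : e.prodSlice a a' h none = none := by
    simpa [h₀] using (e.apply_eq_prodSlice h none).symm
  have hsome : ∃ b', e.prodSlice a a' h (some b) = some b' :=
    Option.ne_none_iff_exists'.mp fun hb => by simpa using (hb.trans hnone.symm)
  rw [Equiv.removeNone_some _ hsome, e.apply_eq_prodSlice h]

namespace Shu

variable {V : Type*} {G : SimpleGraph V} {t n : ℕ} {i : Fin n}

theorem adj_none_iff (hi : i.val < t) {x : Fin n × Option V} :
    (Shu t n G).Adj (i, none) x ↔ x.1 = i ∧ x.2 ≠ none := by
  simp [Shu, hi, hi.not_ge, eq_comm]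

theorem fst_eq_iff (hi : i.val < t) {x : Fin n × Option V} :
    x.1 = i ↔ x = (i, none) ∨ (Shu t n G).Adj (i, none) x := by
  rw [adj_none_iff hi, Prod.ext_iff]
  tauto

theorem adj_some_iff_of_fst_ne (hi : i.val < t) {u : V} {y : Fin n × Option V} (hy : y.1 ≠ i) :
    (Shu t n G).Adj (i, some u) y ↔ ∃ c, y.2 = some c ∧ G.Adj u c := by
  simp [Shu, hi.not_ge, Ne.symm hy]

theorem adj_some_some_iff (hi : i.val < t) {k : Fin n} (hk : k ≠ i) {u c : V} :
    (Shu t n G).Adj (i, some u) (k, some c) ↔ G.Adj u c := by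
  simp [adj_some_iff_of_fst_ne (y := (k, some c)) hi hk]

theorem isClique_neighborSet_none (hi : i.val < t) :
    (Shu t n G).IsClique ((Shu t n G).neighborSet (i, none)) := by
  rintro x hx y hy hxy
  rw [mem_neighborSet, adj_none_iff hi] at hx hy
  exact Or.inr (Or.inl ⟨hx.1.trans hy.1.symm, hx.1 ▸ hi,
    fun h => hxy (Prod.ext (hx.1.trans hy.1.symm) h)⟩)

theorem not_isClique_neighborSet_some (ht : 0 < t) (hn : 1 < n) {v u : V} (hvu : G.Adj v u) :
    ¬ (Shu t n G).IsClique ((Shu t n G).neighborSet (i, some v)) := by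
  intro h
  have hadj : ∀ k : Fin n, (Shu t n G).Adj (i, some v) (k, some u) :=
    fun k => Or.inl ⟨v, u, rfl, rfl, hvu⟩
  simpa [Shu, ht.ne'] using h (hadj ⟨0, by omega⟩) (hadj ⟨1, hn⟩) (by simp)

theorem not_isClique_neighborSet_none_of_le [Nonempty V] (heven : Even (n - t))
    (hi : t ≤ i.val) : ¬ (Shu t n G).IsClique ((Shu t n G).neighborSet (i, none)) := by
  intro h
  obtain ⟨v⟩ := ‹Nonempty V›
  obtain ⟨k, hk⟩ := heven
  -- `i` is matched with the copy `n + t - 1 - i`, which differs from `i` since `n + t - 1` is odd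
  have hadj (o : Option V) : (Shu t n G).Adj (i, none) (⟨n + t - 1 - i.val, by omega⟩, o) :=
    Or.inr (Or.inr ⟨by simp only [ne_eq, Fin.ext_iff]; omega, by simp only; omega, hi,
      by simp only; omega⟩)
  simpa [Shu, show ¬ n + t - 1 - i.val < t by omega] using
    h (hadj none) (hadj (some v)) (by simp)

theorem isClique_neighborSet_iff [Nonempty V] (hG : ∀ v, ∃ u, G.Adj v u) (ht : 0 < t)
    (htn : t < n) (heven : Even (n - t)) {x : Fin n × Option V} :
    (Shu t n G).IsClique ((Shu t n G).neighborSet x) ↔ x.2 = none ∧ x.1.val < t := by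
  obtain ⟨i, _ | v⟩ := x
  · refine ⟨fun h => ⟨rfl, ?_⟩, fun h => isClique_neighborSet_none h.2⟩
    by_contra hi
    exact not_isClique_neighborSet_none_of_le heven (not_lt.mp hi) h
  · obtain ⟨u, hvu⟩ := hG v
    simpa using not_isClique_neighborSet_some ht (by omega) hvu

variable {V₁ V₂ : Type*} {G₁ : SimpleGraph V₁} {G₂ : SimpleGraph V₂}

def congr (e : G₁ ≃g G₂) : Shu t n G₁ ≃g Shu t n G₂ where
  toEquiv := (Equiv.refl _).prodCongr e.toEquiv.optionCongr
  map_rel_iff' := by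
    rintro ⟨i, _ | u⟩ ⟨k, _ | v⟩ <;> simp [Shu, e.map_adj_iff]

theorem fst_iso_apply_eq_iff (φ : Shu t n G₁ ≃g Shu t n G₂) {j : Fin n} (hi : i.val < t)
    (hj : j.val < t) (h : φ (i, none) = (j, none)) (x : Fin n × Option V₁) :
    (φ x).1 = j ↔ x.1 = i := by
  rw [fst_eq_iff hj, fst_eq_iff hi, ← h, φ.apply_eq_iff_eq, φ.map_adj_iff]

theorem exists_iso_apply_none [Nonempty V₂] (hG₂ : ∀ v, ∃ u, G₂.Adj v u) (ht : 0 < t)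
    (htn : t < n) (heven : Even (n - t)) (φ : Shu t n G₁ ≃g Shu t n G₂) (hi : i.val < t) :
    ∃ j : Fin n, j.val < t ∧ φ (i, none) = (j, none) := by
  have h := (φ.isClique_neighborSet_iff _).2 (isClique_neighborSet_none hi)
  rw [isClique_neighborSet_iff hG₂ ht htn heven] at h
  exact ⟨_, h.2, Prod.ext rfl h.1⟩

theorem nonempty_iso_of_iso [Nonempty V₂] (hG₂ : ∀ v, ∃ u, G₂.Adj v u) (ht : 2 ≤ t)
    (htn : t < n) (heven : Even (n - t)) (φ : Shu t n G₁ ≃g Shu t n G₂) :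
    Nonempty (G₁ ≃g G₂) := by
  set i₀ : Fin n := ⟨0, by omega⟩
  set i₁ : Fin n := ⟨1, by omega⟩
  have hi₀ : i₀.val < t := show 0 < t by omega
  have hi₁ : i₁.val < t := show 1 < t by omega
  obtain ⟨j₀, hj₀, h₀⟩ := exists_iso_apply_none hG₂ (by omega) htn heven φ hi₀
  obtain ⟨j₁, hj₁, h₁⟩ := exists_iso_apply_none hG₂ (by omega) htn heven φ hi₁
  have hj : j₁ ≠ j₀ := by
    rintro rfl
    simpa [i₀, i₁] using φ.injective (h₀.trans h₁.symm)
  have hf₀ := fst_iso_apply_eq_iff φ hi₀ hj₀ h₀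
  have hf₁ := fst_iso_apply_eq_iff φ hi₁ hj₁ h₁
  set ψ₀ := (φ.toEquiv.prodSlice i₀ j₀ hf₀).removeNone
  set ψ₁ := (φ.toEquiv.prodSlice i₁ j₁ hf₁).removeNone
  have hψ₀ (u : V₁) : φ (i₀, some u) = (j₀, some (ψ₀ u)) :=
    φ.toEquiv.apply_some_eq_removeNone_prodSlice hf₀ h₀ u
  have hψ₁ (u : V₁) : φ (i₁, some u) = (j₁, some (ψ₁ u)) :=
    φ.toEquiv.apply_some_eq_removeNone_prodSlice hf₁ h₁ u
  have cross (u v : V₁) : G₁.Adj u v ↔ G₂.Adj (ψ₀ u) (ψ₁ v) := by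
    rw [← adj_some_some_iff hi₀ (k := i₁) (by simp [i₀, i₁]), ← φ.map_adj_iff, hψ₀, hψ₁,
      adj_some_some_iff hj₀ hj]
  have twin (v : V₁) (c : V₂) : G₂.Adj (ψ₀ v) c ↔ G₂.Adj (ψ₁ v) c := by
    obtain ⟨k, hk₀, hk₁⟩ := Fin.exists_ne_and_ne_of_two_lt j₀ j₁ (by omega)
    have hy₀ : (φ.symm (k, some c)).1 ≠ i₀ := fun h => hk₀ (by simpa using (hf₀ _).2 h)
    have hy₁ : (φ.symm (k, some c)).1 ≠ i₁ := fun h => hk₁ (by simpa using (hf₁ _).2 h)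
    rw [← adj_some_some_iff (G := G₂) hj₀ hk₀, ← adj_some_some_iff (G := G₂) hj₁ hk₁,
      ← hψ₀, ← hψ₁,
      ← φ.apply_symm_apply (k, some c), φ.map_adj_iff, φ.map_adj_iff,
      adj_some_iff_of_fst_ne hi₀ hy₀, adj_some_iff_of_fst_ne hi₁ hy₁]
  exact ⟨⟨ψ₀, fun {u v} => by rw [cross, G₂.adj_comm, twin, G₂.adj_comm]⟩⟩

end Shu

theorem stmt_17 {V₁ V₂ : Type*} (G₁ : SimpleGraph V₁) (G₂ : SimpleGraph V₂)
    (hc₁ : G₁.Connected) (hc₂ : G₂.Connected)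
    (t n : ℕ) (ht : 2 ≤ t) (htn : t < n) (heven : Even (n - t)) :
    Nonempty (Shu t n G₁ ≃g Shu t n G₂) ↔ Nonempty (G₁ ≃g G₂) := by
  have := hc₁.nonempty
  have := hc₂.nonempty
  refine ⟨fun ⟨φ⟩ => ?_, fun ⟨e⟩ => ⟨Shu.congr e⟩⟩
  rcases subsingleton_or_nontrivial V₂ with h₂ | h₂
  · rcases subsingleton_or_nontrivial V₁ with h₁ | h₁
    · exact nonempty_iso_of_subsingleton G₁ G₂
    · obtain ⟨ψ⟩ :=
        Shu.nonempty_iso_of_iso hc₁.preconnected.exists_adj_of_nontrivial ht htn heven φ.symm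
      exact ⟨ψ.symm⟩
  · exact Shu.nonempty_iso_of_iso hc₂.preconnected.exists_adj_of_nontrivial ht htn heven φ
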